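/- For every n ≥ 0, the number of Motzkin paths of length n with an even number of U steps is odd. -/
import Mathlib


inductive MStep where
  | U : MStep
  | D : MStep
  | H : MStep
deriving DecidableEq

/-- A word in {U,D,H} is a Motzkin path if #U = #D and no prefix has more D's than U's. -/
def IsMotzkin (w : List MStep) : Prop :=
  w.count MStep.U = w.count MStep.D ∧
  ∀ p : List MStep, p <+: w → p.count MStep.D ≤ p.count MStep.U

/-- Number of Motzkin paths of length n (the n-th Motzkin number). -/
noncomputable def motzkinNum (n : ℕ) : ℕ :=
  Nat.card {w : List MStep // w.length = n ∧ IsMotzkin w}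

/-- Number of Motzkin paths of length n with an even number of U steps. -/
noncomputable def evenMotzkin (n : ℕ) : ℕ :=
  Nat.card {w : List MStep // w.length = n ∧ IsMotzkin w ∧ Even (w.count MStep.U)}

/-- Number of Motzkin paths of length n with an odd number of U steps. -/
noncomputable def oddMotzkin (n : ℕ) : ℕ :=
  Nat.card {w : List MStep // w.length = n ∧ IsMotzkin w ∧ Odd (w.count MStep.U)}

/-- The shadow of the n-th Motzkin number: s(n) = a(n) - b(n). -/
noncomputable def shadow (n : ℕ) : ℤ :=
  (evenMotzkin n : ℤ) - (oddMotzkin n : ℤ)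

/-! ### Auxiliary material -/

instance : Fintype MStep :=
  ⟨{MStep.U, MStep.D, MStep.H}, by intro x; cases x <;> simp⟩

lemma isMotzkin_nil : IsMotzkin ([] : List MStep) :=
  ⟨rfl, fun p hp => by simp [List.prefix_nil.mp hp]⟩

lemma head_ne_D {x : MStep} {t : List MStep} (h : IsMotzkin (x :: t)) : x ≠ MStep.D := by
  rintro rfl
  have h2 := h.2 [MStep.D] ⟨t, rfl⟩
  simp [List.count_cons] at h2

lemma isMotzkin_cons_H {t : List MStep} : IsMotzkin (MStep.H :: t) ↔ IsMotzkin t := by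
  constructor
  · intro h
    refine ⟨by simpa [List.count_cons] using h.1, ?_⟩
    intro p hp
    have h2 := h.2 (MStep.H :: p) (List.cons_prefix_cons.mpr ⟨rfl, hp⟩)
    simpa [List.count_cons] using h2
  · intro h
    refine ⟨by simpa [List.count_cons] using h.1, ?_⟩
    intro p hp
    rcases p with _ | ⟨y, p⟩
    · simp
    · obtain ⟨rfl, hp'⟩ := List.cons_prefix_cons.mp hp
      simpa [List.count_cons] using h.2 p hp'

lemma isMotzkin_glue {P Q : List MStep} (hP : IsMotzkin P) (hQ : IsMotzkin Q) :
    IsMotzkin (MStep.U :: P ++ MStep.D :: Q) := by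
  have hP1 := hP.1
  have hQ1 := hQ.1
  constructor
  · simp [List.count_cons, List.count_append]
    omega
  · intro p hp
    rw [List.cons_append] at hp
    rcases p with _ | ⟨x, p⟩
    · simp
    obtain ⟨rfl, hp2⟩ := List.cons_prefix_cons.mp hp
    rcases le_or_gt p.length P.length with hle | hgt
    · have hpre : p <+: P := List.prefix_of_prefix_length_le hp2 (List.prefix_append _ _) hle
      have := hP.2 p hpre
      simp [List.count_cons]
      omega
    · have hPp : P <+: p := List.prefix_of_prefix_length_le (List.prefix_append _ _) hp2 (by omega)
      obtain ⟨r, rfl⟩ := hPp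
      have hr : r <+: MStep.D :: Q := (List.prefix_append_right_inj P).mp hp2
      rcases List.prefix_cons_iff.mp hr with rfl | ⟨q, rfl, hq⟩
      · have := hP.2 P (List.prefix_refl P)
        simp [List.count_cons, List.count_append]
        omega
      · have := hQ.2 q hq
        simp [List.count_cons, List.count_append]
        omega

lemma exists_split {t : List MStep} (h : IsMotzkin (MStep.U :: t)) :
    ∃ P Q : List MStep, t = P ++ MStep.D :: Q ∧ IsMotzkin P ∧ IsMotzkin Q := by
  classical
  set w := MStep.U :: t with hw
  have h1 := h.1
  have hpred : ∃ k, ((w.take (k+1)).count MStep.D = (w.take (k+1)).count MStep.U) := by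
    refine ⟨t.length, ?_⟩
    rw [show t.length + 1 = w.length from rfl, List.take_length]
    exact h1.symm
  have hk₀ := Nat.find_spec hpred
  set k₀ := Nat.find hpred with hk₀def
  have hmin : ∀ m, m < k₀ → (w.take (m+1)).count MStep.D < (w.take (m+1)).count MStep.U := by
    intro m hm
    have hne := Nat.find_min hpred hm
    have hle := h.2 (w.take (m+1)) (List.take_prefix _ _)
    omega
  have hk₀pos : 0 < k₀ := by
    rcases Nat.eq_zero_or_pos k₀ with h0 | hpos
    · exfalso
      rw [h0] at hk₀
      simp [hw, List.count_cons] at hk₀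
    · exact hpos
  have hk₀le : k₀ ≤ t.length := by
    by_contra hgt
    push_neg at hgt
    have := hmin t.length hgt
    rw [show t.length + 1 = w.length from rfl, List.take_length] at this
    omega
  obtain ⟨j, hkj⟩ : ∃ j, k₀ = j + 1 := ⟨k₀ - 1, by omega⟩
  rw [hkj] at hk₀
  have hj : j < t.length := by omega
  have htj : t.take (j+1) = t.take j ++ [t[j]] := by
    rw [List.take_succ, List.getElem?_eq_getElem hj]
    rfl
  have htake1 : w.take (j+1) = MStep.U :: t.take j := by
    rw [hw, List.take_succ_cons]
  have htake2 : w.take (j+2) = MStep.U :: (t.take j ++ [t[j]]) := by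
    rw [hw, List.take_succ_cons, htj]
  have hmj := hmin j (by omega)
  rw [htake1] at hmj
  rw [htake2] at hk₀
  simp [List.count_cons, List.count_append] at hmj
  have hbal : (t.take j).count MStep.U = (t.take j).count MStep.D ∧ t[j] = MStep.D := by
    cases ht : t[j] with
    | U =>
        exfalso
        rw [ht] at hk₀
        simp [List.count_cons, List.count_append] at hk₀
        omega
    | D =>
        rw [ht] at hk₀
        simp [List.count_cons, List.count_append] at hk₀
        exact ⟨by omega, rfl⟩
    | H =>
        exfalso
        rw [ht] at hk₀
        simp [List.count_cons, List.count_append] at hk₀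
        omega
  have hsplit : t = t.take j ++ MStep.D :: t.drop (j+1) := by
    conv_lhs => rw [← List.take_append_drop j t]
    congr 1
    rw [List.drop_eq_getElem_cons hj, hbal.2]
  refine ⟨t.take j, t.drop (j+1), hsplit, ⟨hbal.1, ?_⟩, ⟨?_, ?_⟩⟩
  · -- prefix condition for P
    intro p hp
    have hpt : p <+: t := hp.trans (List.take_prefix _ _)
    have hplen : p.length ≤ j := by
      have := hp.length_le
      simp at this
      omega
    have hpeq : p = t.take p.length := List.prefix_iff_eq_take.mp hpt
    have := hmin p.length (by omega)
    rw [hw, List.take_succ_cons, ← hpeq] at this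
    simp [List.count_cons] at this
    omega
  · -- count condition for Q
    rw [hw] at h1
    conv at h1 => rw [hsplit]
    simp [List.count_cons, List.count_append] at h1
    omega
  · -- prefix condition for Q
    intro p hp
    have hpre : MStep.U :: (t.take j ++ MStep.D :: p) <+: w := by
      rw [hw]
      apply List.cons_prefix_cons.mpr
      refine ⟨rfl, ?_⟩
      conv_rhs => rw [hsplit]
      exact (List.prefix_append_right_inj _).mpr (List.cons_prefix_cons.mpr ⟨rfl, hp⟩)
    have := h.2 _ hpre
    simp [List.count_cons, List.count_append] at this
    have hb := hbal.1
    omega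

lemma no_split_lt {P Q P' Q' : List MStep} (hP : IsMotzkin P) (hP' : IsMotzkin P')
    (heq : P ++ MStep.D :: Q = P' ++ MStep.D :: Q') (hlen : P.length < P'.length) : False := by
  have h1 : P ++ [MStep.D] <+: P' ++ MStep.D :: Q' := by
    rw [← heq]
    exact ⟨Q, by simp⟩
  have hpre : P ++ [MStep.D] <+: P' :=
    List.prefix_of_prefix_length_le h1 (List.prefix_append _ _) (by simp; omega)
  have := hP'.2 _ hpre
  have hb := hP.1
  simp [List.count_append, List.count_cons] at this
  omega

lemma split_unique {P Q P' Q' : List MStep} (hP : IsMotzkin P) (hP' : IsMotzkin P')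
    (heq : P ++ MStep.D :: Q = P' ++ MStep.D :: Q') : P = P' ∧ Q = Q' := by
  rcases Nat.lt_trichotomy P.length P'.length with hlt | he | hgt
  · exact (no_split_lt hP hP' heq hlt).elim
  · have := List.append_inj heq he
    exact ⟨this.1, by injection this.2⟩
  · exact (no_split_lt hP' hP heq.symm hgt).elim

/-- The even-U Motzkin paths of length `n`. -/
abbrev EvenMz (n : ℕ) := {w : List MStep // w.length = n ∧ IsMotzkin w ∧ Even (w.count MStep.U)}

/-- Pairs `(P, Q)` of Motzkin paths with total U-count odd, total length `n - 2`. -/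
abbrev WT (n : ℕ) := {pq : List MStep × List MStep //
    IsMotzkin pq.1 ∧ IsMotzkin pq.2 ∧ pq.1.length + pq.2.length + 2 = n ∧
    Odd (pq.1.count MStep.U + pq.2.count MStep.U)}

abbrev WT0 (n : ℕ) := {x : WT n // Even (x.1.1.count MStep.U)}

instance evenMz_finite (n : ℕ) : Finite (EvenMz n) := by
  have : {w : List MStep | w.length = n ∧ IsMotzkin w ∧ Even (w.count MStep.U)}.Finite :=
    (List.finite_length_eq MStep n).subset fun w hw => hw.1
  exact this.to_subtype

instance wt_finite (n : ℕ) : Finite (WT n) := by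
  have hf : ({p : List MStep | p.length ≤ n} ×ˢ {q : List MStep | q.length ≤ n}).Finite :=
    (List.finite_length_le MStep n).prod (List.finite_length_le MStep n)
  have : {pq : List MStep × List MStep |
      IsMotzkin pq.1 ∧ IsMotzkin pq.2 ∧ pq.1.length + pq.2.length + 2 = n ∧
      Odd (pq.1.count MStep.U + pq.2.count MStep.U)}.Finite :=
    hf.subset fun pq hpq => by
      have := hpq.2.2.1
      exact ⟨by simp only [Set.mem_setOf_eq]; omega, by simp only [Set.mem_setOf_eq]; omega⟩
  exact this.to_subtype

def toE (n : ℕ) : EvenMz n ⊕ WT (n+1) → EvenMz (n+1)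
  | Sum.inl ⟨w, hw⟩ =>
      ⟨MStep.H :: w, by simp [hw.1], isMotzkin_cons_H.mpr hw.2.1, by
        simpa [List.count_cons] using hw.2.2⟩
  | Sum.inr ⟨⟨P, Q⟩, hPQ⟩ =>
      ⟨MStep.U :: P ++ MStep.D :: Q, by
        simp only [List.length_cons, List.length_append]
        have := hPQ.2.2.1
        simp at this ⊢
        omega,
       isMotzkin_glue hPQ.1 hPQ.2.1, by
        obtain ⟨m, hm⟩ := hPQ.2.2.2
        simp only [List.count_cons, List.count_append]
        refine ⟨m + 1, ?_⟩
        simp at hm ⊢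
        omega⟩

lemma toE_bij (n : ℕ) : Function.Bijective (toE n) := by
  constructor
  · rintro (⟨w, hw⟩ | ⟨⟨P, Q⟩, hPQ⟩) (⟨w', hw'⟩ | ⟨⟨P', Q'⟩, hPQ'⟩) heq <;>
      simp only [toE, Subtype.mk.injEq] at heq
    · exact congrArg Sum.inl (Subtype.ext (List.tail_eq_of_cons_eq heq))
    · exact absurd (List.head_eq_of_cons_eq heq) (by simp)
    · exact absurd (List.head_eq_of_cons_eq heq) (by simp)
    · have := List.tail_eq_of_cons_eq heq
      obtain ⟨rfl, rfl⟩ := split_unique hPQ.1 hPQ'.1 this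
      rfl
  · rintro ⟨w, hlen, hM, hev⟩
    rcases w with _ | ⟨x, t⟩
    · simp at hlen
    have hx := head_ne_D hM
    cases x with
    | D => exact absurd rfl hx
    | H =>
        refine ⟨Sum.inl ⟨t, ?_, isMotzkin_cons_H.mp hM, ?_⟩, ?_⟩
        · simpa using hlen
        · simpa [List.count_cons] using hev
        · rfl
    | U =>
        obtain ⟨P, Q, hsplit, hP, hQ⟩ := exists_split hM
        subst hsplit
        have hlen' : P.length + Q.length + 2 = n + 1 := by
          simp at hlen
          omega
        have hodd : Odd (P.count MStep.U + Q.count MStep.U) := by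
          obtain ⟨m, hm⟩ := hev
          simp [List.count_cons, List.count_append] at hm
          exact ⟨m - 1, by omega⟩
        exact ⟨Sum.inr ⟨(P, Q), hP, hQ, hlen', hodd⟩, Subtype.ext rfl⟩

def toW (n : ℕ) : WT0 n ⊕ WT0 n → WT n
  | Sum.inl x => x.1
  | Sum.inr x =>
      ⟨(x.1.1.2, x.1.1.1), x.1.2.2.1, x.1.2.1, by
        have h := x.1.2.2.2.1
        show x.1.1.2.length + x.1.1.1.length + 2 = n
        omega, by
        have h := x.1.2.2.2.2
        show Odd (x.1.1.2.count MStep.U + x.1.1.1.count MStep.U)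
        rwa [Nat.add_comm]⟩

lemma toW_bij (n : ℕ) : Function.Bijective (toW n) := by
  constructor
  · rintro (x | x) (y | y) heq <;> simp only [toW, Subtype.mk.injEq] at heq
    · exact congrArg Sum.inl (Subtype.ext heq)
    · exfalso
      have hx := x.2
      have hy := y.2
      have hyo := y.1.2.2.2.2
      rw [heq] at hx
      simp only [Prod.fst] at hx
      rcases hx with ⟨a, ha⟩
      rcases hy with ⟨b, hb⟩
      rcases hyo with ⟨c, hc⟩
      omega
    · exfalso
      have hx := x.2
      have hy := y.2
      have hxo := x.1.2.2.2.2
      rw [← heq] at hy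
      simp only [Prod.fst] at hy
      rcases hx with ⟨a, ha⟩
      rcases hy with ⟨b, hb⟩
      rcases hxo with ⟨c, hc⟩
      omega
    · refine congrArg Sum.inr (Subtype.ext (Subtype.ext ?_))
      have h1 := congrArg Prod.fst heq
      have h2 := congrArg Prod.snd heq
      simp only at h1 h2
      exact Prod.ext h2 h1
  · rintro ⟨⟨P, Q⟩, hP, hQ, hlen, hodd⟩
    have hlen' : P.length + Q.length + 2 = n := hlen
    have hodd' : Odd (P.count MStep.U + Q.count MStep.U) := hodd
    rcases Nat.even_or_odd (P.count MStep.U) with hev | hod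
    · exact ⟨Sum.inl ⟨⟨(P, Q), hP, hQ, hlen, hodd⟩, hev⟩, rfl⟩
    · have hevQ : Even (Q.count MStep.U) := by
        rcases hod with ⟨a, ha⟩
        rcases hodd' with ⟨c, hc⟩
        exact ⟨c - a, by omega⟩
      refine ⟨Sum.inr ⟨⟨(Q, P), hQ, hP, by
        show Q.length + P.length + 2 = n
        omega, by
        show Odd (Q.count MStep.U + P.count MStep.U)
        rwa [Nat.add_comm]⟩, hevQ⟩, ?_⟩
      exact Subtype.ext rfl

lemma card_step (n : ℕ) : evenMotzkin (n+1) = evenMotzkin n + Nat.card (WT (n+1)) := by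
  have h := Nat.card_eq_of_bijective (toE n) (toE_bij n)
  rw [Nat.card_sum] at h
  exact h.symm

lemma card_WT_even (n : ℕ) : Even (Nat.card (WT n)) := by
  have h := Nat.card_eq_of_bijective (toW n) (toW_bij n)
  rw [Nat.card_sum] at h
  exact ⟨Nat.card (WT0 n), h.symm⟩

lemma evenMotzkin_zero : evenMotzkin 0 = 1 := by
  have : Unique (EvenMz 0) :=
    { default := ⟨[], rfl, isMotzkin_nil, by simp⟩
      uniq := fun w => Subtype.ext (List.length_eq_zero_iff.mp w.2.1) }
  exact Nat.card_unique

theorem stmt_5 : ∀ n : ℕ, Odd (evenMotzkin n) := by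
  intro n
  induction n with
  | zero => rw [evenMotzkin_zero]; exact odd_one
  | succ n ih =>
      rw [card_step]
      exact ih.add_even (card_WT_even (n+1))
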